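/- For every tree T with μ(Lim T) > 0, every ε > 0 and every sequence (ε_i)_{0<i<ω} of positive reals, there is a subtree T' of T and an increasing sequence (n_i)_{i<ω} with n_0 = 0 such that μ(Lim T') > μ(Lim T) − ε and for every i > 0 and every η ∈ 2^{n_i} ∩ T', μ(Lim(T'^{[η]})) > 2^{−n_i}(1 − ε_i). -/

import Mathlib

open MeasureTheory Pointwise

/-- Cantor space `2^ω` with componentwise addition mod 2. -/
abbrev Cantor : Type := ℕ → ZMod 2
/-- Finite binary sequences, the nodes of `2^{<ω}`. -/
abbrev FinSeq : Type := List (ZMod 2)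

instance : TopologicalSpace (ZMod 2) := ⊥
instance : DiscreteTopology (ZMod 2) := ⟨rfl⟩
noncomputable instance : MeasurableSpace Cantor := borel Cantor
instance : BorelSpace Cantor := ⟨rfl⟩

/-- The uniform (Lebesgue) product measure on `2^ω`, realized as the Haar measure of the
compact group `2^ω` normalized so that the whole space has measure 1. -/
noncomputable def μC : Measure Cantor := Measure.addHaarMeasure ⊤

/-- `X` is null-additive: `X + A` is null for every null `A`. -/
def NullAdditive (X : Set Cantor) : Prop := ∀ A : Set Cantor, μC A = 0 → μC (X + A) = 0

/-- `X` is meager-additive: `X + A` is meager for every meager `A`. -/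
def MeagerAdditive (X : Set Cantor) : Prop := ∀ A : Set Cantor, IsMeagre A → IsMeagre (X + A)

/-- A tree on `2^{<ω}`: nonempty, closed under initial segments, and every node has
extensions in the tree of every greater length. -/
def IsTree (T : Set FinSeq) : Prop :=
  T.Nonempty ∧ (∀ σ τ : FinSeq, σ <+: τ → τ ∈ T → σ ∈ T) ∧
    ∀ σ ∈ T, ∀ n, σ.length < n → ∃ τ ∈ T, σ <+: τ ∧ τ.length = n

/-- Restriction `x↾n` of `x ∈ 2^ω`. -/
def res (x : Cantor) (n : ℕ) : FinSeq := (List.range n).map x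

/-- `Lim T = {x ∈ 2^ω : ∀ n, x↾n ∈ T}`. -/
def LimT (T : Set FinSeq) : Set Cantor := {x | ∀ n, res x n ∈ T}

/-- A nowhere dense tree: every node has an extension outside the tree. -/
def NwdTree (T : Set FinSeq) : Prop := ∀ η ∈ T, ∃ τ : FinSeq, η <+: τ ∧ τ ∉ T

/-- Componentwise mod-2 addition of finite sequences (of the same length). -/
def finAdd : FinSeq → FinSeq → FinSeq := List.zipWith (· + ·)

/-- `T + S = {η + σ : η ∈ T, σ ∈ S, same length}`. -/
def treeSum (T S : Set FinSeq) : Set FinSeq :=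
  {ρ | ∃ η ∈ T, ∃ σ ∈ S, η.length = σ.length ∧ ρ = finAdd η σ}

/-- `T^{[η]} = {τ ∈ T : τ ⊑ η or η ⊑ τ}`. -/
def through (T : Set FinSeq) (η : FinSeq) : Set FinSeq := {τ ∈ T | τ <+: η ∨ η <+: τ}

/-- `A^{fin}`: points agreeing with some point of `A` at all but finitely many coordinates. -/
def finEq (A : Set Cantor) : Set Cantor := {y | ∃ x ∈ A, ∀ᶠ n in Filter.atTop, y n = x n}

/-- `U^{⟨ν⟩} = {τ : ν⌢τ ∈ U}`. -/
def above (U : Set FinSeq) (ν : FinSeq) : Set FinSeq := {τ | ν ++ τ ∈ U}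

/-- A corset: a nondecreasing function `ω → ω \ {0}` tending to infinity. -/
def Corset (f : ℕ → ℕ) : Prop :=
  Monotone f ∧ (∀ n, 0 < f n) ∧ Filter.Tendsto f Filter.atTop Filter.atTop

/-- `S` is of width `f`: `|S ∩ 2^n| ≤ f n` for all `n`. -/
def widthLe (S : Set FinSeq) (f : ℕ → ℕ) : Prop := ∀ n, {τ ∈ S | τ.length = n}.ncard ≤ f n

/-- `S` is almost of width `f`: `|S ∩ 2^n| ≤ f n` for all sufficiently large `n`. -/
def almostWidthLe (S : Set FinSeq) (f : ℕ → ℕ) : Prop :=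
  ∀ᶠ n in Filter.atTop, {τ ∈ S | τ.length = n}.ncard ≤ f n

/-!
Fix tolerances `δ_i > 0`. Call a node `η` of level `n` dense if `Lim T` misses less than
`δ · 2^{-n}` of the cylinder `[η]`. The sparse nodes of level `n` in `T` cover at most
`δ⁻¹ μ({x : x↾n ∈ T} \ Lim T)`, which tends to `0` since `Lim T = ⋂ₙ {x : x↾n ∈ T}`. So the
levels `n_i` can be chosen one after another such that discarding the branches that are sparse
at some later level `n_k` costs less than `δ_i 2^{-n_i}` (and less than `ε` in total). `T'` is
the tree of the branches of `T` that are dense at every chosen level: below a node of `T'` at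
level `n_i`, `Lim T` misses less than `δ_i 2^{-n_i}`, and passing to `Lim T'` loses at most as
much again.
-/

open scoped ENNReal Topology
open Filter

lemma ENNReal.tsum_inv_two_pow_succ : ∑' j : ℕ, (2⁻¹ : ℝ≥0∞) ^ (j + 1) = 1 := by
  rw [ENNReal.tsum_geometric_add_one, ENNReal.one_sub_inv_two, inv_inv,
    ENNReal.inv_mul_cancel two_ne_zero ENNReal.ofNat_ne_top]

lemma ENNReal.tsub_lt_of_le_add_of_lt_min {a b s ε : ℝ≥0∞} (hb : b ≠ ⊤) (h : a ≤ b + s)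
    (hs : s < min ε a) : a - ε < b := by
  have ha : a ≠ ⊤ := ne_top_of_le_ne_top (ENNReal.add_ne_top.mpr ⟨hb, hs.ne_top⟩) h
  calc a - ε ≤ a - min ε a := tsub_le_tsub_left (min_le_left _ _) a
    _ < b := (ENNReal.sub_lt_iff_lt_right (ne_top_of_le_ne_top ha (min_le_right _ _))
      (min_le_right _ _)).mpr (h.trans_lt (ENNReal.add_lt_add_left hb hs))

lemma ENNReal.mul_one_sub_lt_of_lt_add {a b e : ℝ≥0∞} (ha : a ≠ ⊤) (he : e ≤ 1)
    (h : a < b + e * a) : a * (1 - e) < b := by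
  have hsplit : a * (1 - e) + e * a = a := by
    rw [mul_comm e, ← mul_add, tsub_add_cancel_of_le he, mul_one]
  exact (ENNReal.add_lt_add_iff_right
    (ENNReal.mul_ne_top (ne_top_of_le_ne_top ENNReal.one_ne_top he) ha)).mp (hsplit.trans_lt h)

lemma mul_measure_biUnion_le_measure_diff {α ι : Type*} [MeasurableSpace α] {μ : Measure α}
    {s : Set ι} (hs : s.Countable) {c : ι → Set α} (hd : s.PairwiseDisjoint c)
    (hc : ∀ i ∈ s, MeasurableSet (c i)) {A : Set α} (hA : MeasurableSet A) {δ : ℝ≥0∞}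
    (h : ∀ i ∈ s, δ * μ (c i) ≤ μ (c i \ A)) :
    δ * μ (⋃ i ∈ s, c i) ≤ μ ((⋃ i ∈ s, c i) \ A) := by
  simp only [Set.iUnion_sdiff]
  rw [measure_biUnion hs hd hc, measure_biUnion hs (hd.mono fun _ => Set.sdiff_subset)
    fun i hi => (hc i hi).diff hA, ← ENNReal.tsum_mul_left]
  exact ENNReal.tsum_le_tsum fun i => h i i.2

lemma exists_strictMono_tsum_tail_le (f : ℕ → ℕ → ℝ≥0∞) (hf : ∀ k, Tendsto (f k) atTop (𝓝 0))
    (w : ℕ → ℕ → ℝ≥0∞) (hw : ∀ k N, 0 < w k N) :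
    ∃ n : ℕ → ℕ, StrictMono n ∧ n 0 = 0 ∧
      ∀ i, ∑' j, f (i + j + 1) (n (i + j + 1)) ≤ w i (n i) := by
  -- The largest minorant of `w` antitone in both arguments: a budget `w' k (n k)` fixed at level
  -- `k` then respects the tolerances of all earlier levels as well.
  set w' : ℕ → ℕ → ℝ≥0∞ := fun k N =>
    (Finset.range (k + 1) ×ˢ Finset.range (N + 1)).inf fun p => w p.1 p.2
  have hw'_pos : ∀ k N, 0 < w' k N := fun k N =>
    (Finset.lt_inf_iff ENNReal.zero_lt_top).mpr fun p _ => hw p.1 p.2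
  have hw'_le : ∀ k N, w' k N ≤ w k N := fun k N =>
    Finset.inf_le (f := fun p => w p.1 p.2) (b := (k, N)) (Finset.mem_product.mpr
      ⟨Finset.self_mem_range_succ k, Finset.self_mem_range_succ N⟩)
  have hw'_anti : ∀ {i k N M}, i ≤ k → N ≤ M → w' k M ≤ w' i N := fun hik hNM =>
    Finset.inf_mono (Finset.product_subset_product (Finset.range_subset_range.mpr (by omega))
      (Finset.range_subset_range.mpr (by omega)))
  have hnext : ∀ k N, ∃ n, N < n ∧ f (k + 1) n ≤ 2⁻¹ ^ (k + 1) * w' k N := fun k N =>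
    have hpos : 0 < (2⁻¹ : ℝ≥0∞) ^ (k + 1) * w' k N :=
      ENNReal.mul_pos (pow_ne_zero _ (ENNReal.inv_ne_zero.mpr ENNReal.ofNat_ne_top))
        (hw'_pos k N).ne'
    (((hf (k + 1)).eventually (Iio_mem_nhds hpos)).and (eventually_gt_atTop N)).exists.imp
      fun _ h => ⟨h.2, h.1.le⟩
  choose next hnext using hnext
  let n : ℕ → ℕ := fun k => Nat.rec 0 next k
  have hn_succ : ∀ k, n (k + 1) = next k (n k) := fun _ => rfl
  have hn_mono : StrictMono n := strictMono_nat_of_lt_succ fun k => (hnext k (n k)).1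
  refine ⟨n, hn_mono, rfl, fun i => ?_⟩
  calc ∑' j, f (i + j + 1) (n (i + j + 1))
      ≤ ∑' j, 2⁻¹ ^ (j + 1) * w' i (n i) := ENNReal.tsum_le_tsum fun j => by
        rw [hn_succ]
        refine (hnext (i + j) (n (i + j))).2.trans ?_
        exact mul_le_mul' (pow_le_pow_of_le_one zero_le (ENNReal.inv_le_one.mpr one_le_two)
          (by omega)) (hw'_anti (by omega) (hn_mono.monotone (by omega)))
    _ = w' i (n i) := by rw [ENNReal.tsum_mul_right, ENNReal.tsum_inv_two_pow_succ, one_mul]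
    _ ≤ w i (n i) := hw'_le i (n i)

lemma length_res (x : Cantor) (n : ℕ) : (res x n).length = n := by simp [res]

lemma res_succ (x : Cantor) (n : ℕ) : res x (n + 1) = res x n ++ [x n] := by
  simp [res, List.range_succ]

lemma take_res (x : Cantor) {m n : ℕ} (h : m ≤ n) : (res x n).take m = res x m := by
  simp [res, ← List.map_take, List.take_range, Nat.min_eq_left h]

lemma res_prefix_res (x : Cantor) {m n : ℕ} (h : m ≤ n) : res x m <+: res x n :=
  take_res x h ▸ List.take_prefix _ _

lemma res_length_eq_of_prefix {x : Cantor} {σ : FinSeq} {n : ℕ} (h : σ <+: res x n) :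
    res x σ.length = σ := by
  have hl : σ.length ≤ n := length_res x n ▸ h.length_le
  rw [← take_res x hl, ← List.prefix_iff_eq_take.mp h]

lemma continuous_res (n : ℕ) : Continuous fun x : Cantor => res x n := by
  suffices ∀ l : List ℕ, Continuous fun x : Cantor => l.map x from this _
  intro l
  induction l with
  | nil => exact continuous_const
  | cons a l ih => exact List.continuous_cons.comp ((continuous_apply a).prodMk ih)

lemma measurableSet_setOf_res_mem (S : Set FinSeq) (n : ℕ) :
    MeasurableSet {x : Cantor | res x n ∈ S} :=
  ((isOpen_discrete S).preimage (continuous_res n)).measurableSet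

lemma LimT_eq_iInter (T : Set FinSeq) : LimT T = ⋂ n, {x | res x n ∈ T} := by
  ext x; simp [LimT]

lemma measurableSet_LimT (T : Set FinSeq) : MeasurableSet (LimT T) :=
  LimT_eq_iInter T ▸ MeasurableSet.iInter fun n => measurableSet_setOf_res_mem T n

def cyl (η : FinSeq) : Set Cantor := {x | res x η.length = η}

lemma measurableSet_cyl (η : FinSeq) : MeasurableSet (cyl η) :=
  measurableSet_setOf_res_mem {η} η.length

lemma mem_cyl_append_singleton {x : Cantor} {η : FinSeq} {b : ZMod 2} :
    x ∈ cyl (η ++ [b]) ↔ x ∈ cyl η ∧ x η.length = b := by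
  simp only [cyl, Set.mem_ofPred_eq, List.length_append, List.length_singleton, res_succ]
  constructor
  · intro h
    simpa using List.append_inj' h rfl
  · rintro ⟨h, rfl⟩
    rw [h]

lemma μC_univ : μC Set.univ = 1 := by
  simpa [μC] using
    Measure.addHaarMeasure_self (K₀ := (⊤ : TopologicalSpace.PositiveCompacts Cantor))

instance : IsProbabilityMeasure μC := ⟨μC_univ⟩

instance : μC.IsAddLeftInvariant := by unfold μC; infer_instance

lemma single_add_mem_cyl {x : Cantor} {η : FinSeq} (b : ZMod 2) :
    Pi.single η.length b + x ∈ cyl η ↔ x ∈ cyl η := by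
  suffices res (Pi.single η.length b + x) η.length = res x η.length by
    simp only [cyl, Set.mem_ofPred_eq, this]
  exact List.map_congr_left fun i hi => by simp [(List.mem_range.mp hi).ne]

lemma cyl_append_one (η : FinSeq) :
    cyl (η ++ [1]) = (Pi.single η.length 1 + ·) ⁻¹' cyl (η ++ [0]) := by
  ext x
  simp only [Set.mem_preimage, mem_cyl_append_singleton, single_add_mem_cyl, Pi.add_apply,
    Pi.single_eq_same]
  rw [(by decide : ∀ c : ZMod 2, c = 1 ↔ 1 + c = 0)]

lemma cyl_eq_union (η : FinSeq) : cyl η = cyl (η ++ [0]) ∪ cyl (η ++ [1]) := by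
  ext x
  simp only [Set.mem_union, mem_cyl_append_singleton, ← and_or_left, iff_self_and]
  intro
  exact (by decide : ∀ c : ZMod 2, c = 0 ∨ c = 1) _

lemma μC_cyl (η : FinSeq) : μC (cyl η) = 2⁻¹ ^ η.length := by
  induction η using List.reverseRecOn with
  | nil => simp [cyl, res]
  | append_singleton η b ih =>
    have hdisj : Disjoint (cyl (η ++ [0])) (cyl (η ++ [1])) :=
      Set.disjoint_left.mpr fun x h0 h1 => by
        rw [mem_cyl_append_singleton] at h0 h1
        exact absurd (h0.2.symm.trans h1.2) (by decide)
    have hhalf : μC (cyl (η ++ [1])) = μC (cyl (η ++ [0])) := by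
      rw [cyl_append_one, measure_preimage_add]
    have h0 : 2 * μC (cyl (η ++ [0])) = 2 * 2⁻¹ ^ (η.length + 1) :=
      calc 2 * μC (cyl (η ++ [0])) = μC (cyl η) := by
            rw [cyl_eq_union η, measure_union hdisj (measurableSet_cyl _), hhalf, two_mul]
        _ = 2 * 2⁻¹ ^ (η.length + 1) := by
            rw [ih, pow_succ, mul_comm, mul_assoc,
              ENNReal.inv_mul_cancel two_ne_zero ENNReal.ofNat_ne_top, mul_one]
    rw [ENNReal.mul_right_inj two_ne_zero ENNReal.ofNat_ne_top] at h0
    rcases (by decide : ∀ c : ZMod 2, c = 0 ∨ c = 1) b with rfl | rfl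
    · simpa using h0
    · simpa [hhalf] using h0

lemma LimT_mono {S T : Set FinSeq} (h : S ⊆ T) : LimT S ⊆ LimT T := fun _ hx n => h (hx n)

lemma LimT_through (T : Set FinSeq) (η : FinSeq) :
    LimT (through T η) = LimT T ∩ cyl η := by
  ext x
  refine ⟨fun h => ⟨fun k => (h k).1, ?_⟩, fun ⟨hx, hη⟩ k => ⟨hx k, ?_⟩⟩
  · rcases (h η.length).2 with hp | hp
    · exact hp.eq_of_length (length_res x _)
    · exact (hp.eq_of_length (length_res x _).symm).symm
  · rw [← hη]
    rcases le_total k η.length with hk | hk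
    · exact Or.inl (res_prefix_res x hk)
    · exact Or.inr (res_prefix_res x hk)

def treeOf (C : Set Cantor) : Set FinSeq := {τ | ∃ x ∈ C, ∃ n, res x n = τ}

lemma res_mem_treeOf {C : Set Cantor} {x : Cantor} (hx : x ∈ C) (n : ℕ) :
    res x n ∈ treeOf C :=
  ⟨x, hx, n, rfl⟩

lemma isTree_treeOf {C : Set Cantor} (hC : C.Nonempty) : IsTree (treeOf C) := by
  obtain ⟨x, hx⟩ := hC
  refine ⟨⟨_, res_mem_treeOf hx 0⟩, ?_, ?_⟩
  · rintro σ τ hστ ⟨y, hy, m, rfl⟩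
    exact ⟨y, hy, _, res_length_eq_of_prefix hστ⟩
  · rintro τ ⟨y, hy, m, rfl⟩ n hn
    exact ⟨res y n, res_mem_treeOf hy n, res_prefix_res y (by simpa [length_res] using hn.le),
      length_res y n⟩

lemma treeOf_LimT_subset (S : Set FinSeq) : treeOf (LimT S) ⊆ S := by
  rintro τ ⟨x, hx, n, rfl⟩
  exact hx n

lemma LimT_treeOf_LimT (S : Set FinSeq) : LimT (treeOf (LimT S)) = LimT S :=
  (LimT_mono (treeOf_LimT_subset S)).antisymm fun _ hx n => res_mem_treeOf hx n

lemma setOf_res_mem_eq_biUnion {S : Set FinSeq} {n : ℕ} (hS : ∀ η ∈ S, η.length = n) :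
    {x : Cantor | res x n ∈ S} = ⋃ η ∈ S, cyl η := by
  ext x
  simp only [Set.mem_ofPred_eq, Set.mem_iUnion, cyl, exists_prop]
  constructor
  · intro hx
    exact ⟨_, hx, by rw [length_res]⟩
  · rintro ⟨η, hη, hx⟩
    rwa [← hS η hη, hx]

lemma pairwiseDisjoint_cyl {S : Set FinSeq} {n : ℕ} (hS : ∀ η ∈ S, η.length = n) :
    S.PairwiseDisjoint cyl := by
  intro η hη η' hη' hne
  refine Set.disjoint_left.mpr fun x (hx : _ = _) (hx' : _ = _) => hne ?_
  rw [← hx, ← hx', hS η hη, hS η' hη']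

def denseNodes (A : Set Cantor) (δ : ℝ≥0∞) : Set FinSeq :=
  {η | μC (cyl η \ A) < δ * 2⁻¹ ^ η.length}

lemma mul_measure_diff_denseNodes_le {A : Set Cantor} (hA : MeasurableSet A) (δ : ℝ≥0∞)
    (S : Set FinSeq) (n : ℕ) :
    δ * μC ({x | res x n ∈ S} \ {x | res x n ∈ denseNodes A δ}) ≤
      μC ({x | res x n ∈ S} \ A) := by
  set S' := {η ∈ S | η.length = n ∧ η ∉ denseNodes A δ}
  have hS' : ∀ η ∈ S', η.length = n := fun η hη => hη.2.1
  have hset : {x | res x n ∈ S} \ {x | res x n ∈ denseNodes A δ} = ⋃ η ∈ S', cyl η := by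
    rw [← setOf_res_mem_eq_biUnion hS']
    ext x
    simp [S', length_res]
  rw [hset]
  refine (mul_measure_biUnion_le_measure_diff S'.to_countable (pairwiseDisjoint_cyl hS')
    (fun η _ => measurableSet_cyl η) hA fun η hη => ?_).trans
    (measure_mono (Set.sdiff_subset_sdiff_left ?_))
  · rw [μC_cyl]
    exact not_lt.mp hη.2.2
  · rw [← setOf_res_mem_eq_biUnion hS']
    exact fun x hx => hx.1

lemma tendsto_measure_LimT_diff_denseNodes {T : Set FinSeq}
    (hT : ∀ σ τ : FinSeq, σ <+: τ → τ ∈ T → σ ∈ T) {δ : ℝ≥0∞} (hδ : δ ≠ 0) (hδ' : δ ≠ ⊤) :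
    Tendsto (fun n => μC (LimT T \ {x | res x n ∈ denseNodes (LimT T) δ})) atTop (𝓝 0) := by
  set U : ℕ → Set Cantor := fun n => {x | res x n ∈ T}
  have hU : Tendsto (fun n => μC (U n \ LimT T)) atTop (𝓝 0) := by
    have hanti : Antitone fun n => U n \ LimT T := fun m n hmn =>
      Set.sdiff_subset_sdiff_left fun x hx => hT _ _ (res_prefix_res x hmn) hx
    have := tendsto_measure_iInter_atTop
      (fun n => ((measurableSet_setOf_res_mem T n).diff (measurableSet_LimT T)).nullMeasurableSet)
      hanti ⟨0, measure_ne_top μC _⟩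
    have hempty : ⋂ n, (U n \ LimT T) = ∅ := Set.eq_empty_iff_forall_notMem.mpr fun x hx =>
      (Set.mem_iInter.mp hx 0).2 fun n => (Set.mem_iInter.mp hx n).1
    rwa [hempty, measure_empty] at this
  have hle : ∀ n, μC (LimT T \ {x | res x n ∈ denseNodes (LimT T) δ}) ≤
      δ⁻¹ * μC (U n \ LimT T) := fun n => by
    refine (ENNReal.mul_le_iff_le_inv hδ hδ').mp (le_trans ?_
      (mul_measure_diff_denseNodes_le (measurableSet_LimT T) δ T n))
    gcongr
    exact fun x hx => hx n
  refine tendsto_of_tendsto_of_tendsto_of_le_of_le tendsto_const_nhds ?_ (fun _ => zero_le) hle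
  simpa using ENNReal.Tendsto.const_mul hU (Or.inr (ENNReal.inv_ne_top.mpr hδ))

lemma res_eq_res_of_mem_cyl {x y : Cantor} {m n : ℕ} (hx : x ∈ cyl (res y n)) (hmn : m ≤ n) :
    res x m = res y m := by
  have hx : res x n = res y n := by simpa [cyl, length_res] using hx
  rw [← take_res x hmn, hx, take_res y hmn]

def prune (T : Set FinSeq) (n : ℕ → ℕ) (D : ℕ → Set FinSeq) : Set FinSeq :=
  {τ ∈ T | ∀ k, 0 < k → τ.length = n k → τ ∈ D k}

lemma mem_LimT_prune_iff {T : Set FinSeq} {n : ℕ → ℕ} {D : ℕ → Set FinSeq} {x : Cantor} :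
    x ∈ LimT (prune T n D) ↔ x ∈ LimT T ∧ ∀ k, 0 < k → res x (n k) ∈ D k := by
  refine ⟨fun h => ⟨fun m => (h m).1, fun k hk => (h (n k)).2 k hk (length_res x _)⟩,
    fun ⟨hx, hD⟩ m => ⟨hx m, fun k hk hm => ?_⟩⟩
  rw [length_res] at hm
  exact hm ▸ hD k hk

lemma measure_le_measure_LimT_prune_add {T : Set FinSeq} {n : ℕ → ℕ} {D : ℕ → Set FinSeq}
    {i : ℕ} {C : Set Cantor} (hC : C ⊆ LimT T)
    (hCD : ∀ x ∈ C, ∀ k, 0 < k → k ≤ i → res x (n k) ∈ D k) :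
    μC C ≤ μC (LimT (prune T n D) ∩ C) +
      ∑' j, μC (LimT T \ {x | res x (n (i + j + 1)) ∈ D (i + j + 1)}) := by
  have hsub : C ⊆ (LimT (prune T n D) ∩ C) ∪
      ⋃ j, LimT T \ {x | res x (n (i + j + 1)) ∈ D (i + j + 1)} := by
    intro x hxC
    by_cases hx : x ∈ LimT (prune T n D)
    · exact Or.inl ⟨hx, hxC⟩
    obtain ⟨k, hk, hkD⟩ : ∃ k, 0 < k ∧ res x (n k) ∉ D k := by
      simpa [mem_LimT_prune_iff, hC hxC] using hx
    obtain ⟨j, rfl⟩ : ∃ j, k = i + j + 1 :=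
      ⟨k - i - 1, by have := mt (hCD x hxC k hk) hkD; omega⟩
    exact Or.inr (Set.mem_iUnion.mpr ⟨j, hC hxC, hkD⟩)
  exact (measure_mono hsub).trans
    ((measure_union_le _ _).trans (by gcongr; exact measure_iUnion_le _))

lemma exists_levels_subset_dense_cyl {T : Set FinSeq}
    (hT : ∀ σ τ : FinSeq, σ <+: τ → τ ∈ T → σ ∈ T) (δ : ℕ → ℝ≥0∞) (hδ : ∀ k, δ k ≠ 0)
    (hδ' : ∀ k, δ k ≠ ⊤) :
    ∃ n : ℕ → ℕ, StrictMono n ∧ n 0 = 0 ∧ ∃ S ⊆ T, μC (LimT T) ≤ μC (LimT S) + δ 0 ∧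
      ∀ i, 0 < i → ∀ y ∈ LimT S,
        2⁻¹ ^ n i < μC (LimT S ∩ cyl (res y (n i))) + 2 * δ i * 2⁻¹ ^ n i := by
  obtain ⟨n, hn, hn0, htail⟩ := exists_strictMono_tsum_tail_le
    (fun k N => μC (LimT T \ {x | res x N ∈ denseNodes (LimT T) (δ k)}))
    (fun k => tendsto_measure_LimT_diff_denseNodes hT (hδ k) (hδ' k))
    (fun i N => δ i * 2⁻¹ ^ N)
    (fun i N => ENNReal.mul_pos (hδ i)
      (pow_ne_zero _ (ENNReal.inv_ne_zero.mpr ENNReal.ofNat_ne_top)))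
  set S := prune T n fun k => denseNodes (LimT T) (δ k)
  have hloss : ∀ i {C}, C ⊆ LimT T →
      (∀ x ∈ C, ∀ k, 0 < k → k ≤ i → res x (n k) ∈ denseNodes (LimT T) (δ k)) →
      μC C ≤ μC (LimT S ∩ C) + δ i * 2⁻¹ ^ n i := fun i C hC hCD =>
    (measure_le_measure_LimT_prune_add hC hCD).trans (by gcongr; exact htail i)
  have hST : LimT S ⊆ LimT T := LimT_mono fun τ hτ => hτ.1
  refine ⟨n, hn, hn0, S, fun τ hτ => hτ.1, ?_, fun i hi y hy => ?_⟩
  · simpa [hn0, Set.inter_eq_left.mpr hST] using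
      hloss 0 subset_rfl fun x _ k hk hk0 => absurd hk (by omega)
  have hyD := (mem_LimT_prune_iff.mp hy).2
  have hcyl : μC (cyl (res y (n i))) = 2⁻¹ ^ n i := by rw [μC_cyl, length_res]
  calc 2⁻¹ ^ n i ≤ μC (LimT T ∩ cyl (res y (n i))) + μC (cyl (res y (n i)) \ LimT T) := by
        rw [Set.inter_comm, ← hcyl]; exact measure_le_inter_add_sdiff _ _ _
    _ < (μC (LimT S ∩ cyl (res y (n i))) + δ i * 2⁻¹ ^ n i) + δ i * 2⁻¹ ^ n i := by
        refine ENNReal.add_lt_add_of_le_of_lt (measure_ne_top _ _) ?_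
          (by simpa [denseNodes, length_res] using hyD i hi)
        refine (hloss i Set.inter_subset_left fun x hx k hk hki => ?_).trans ?_
        · exact res_eq_res_of_mem_cyl hx.2 (hn.monotone hki) ▸ hyD k hk
        · gcongr
          exact Set.inter_subset_right
    _ = _ := by ring

/-- Lemma B. -/
theorem stmt11 (T : Set FinSeq) (hT : IsTree T) (h0 : 0 < μC (LimT T))
    (ε : ENNReal) (hε : 0 < ε) (εs : ℕ → ENNReal) (hεs : ∀ i, 0 < i → 0 < εs i) :
    ∃ T' : Set FinSeq, IsTree T' ∧ T' ⊆ T ∧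
      ∃ n : ℕ → ℕ, StrictMono n ∧ n 0 = 0 ∧
        μC (LimT T) - ε < μC (LimT T') ∧
        ∀ i, 0 < i → ∀ η ∈ T', η.length = n i →
          (2 : ENNReal)⁻¹ ^ n i * (1 - εs i) < μC (LimT (through T' η)) := by
  -- `e 0` bounds the total loss of measure, `e i` for `i > 0` the loss inside a cylinder of
  -- level `n i`.
  set e : ℕ → ℝ≥0∞ := fun i => if i = 0 then min ε (μC (LimT T)) else min (εs i) 1 with he
  have he_pos : ∀ i, e i ≠ 0 := fun i => by
    by_cases hi : i = 0
    · simpa [he, hi] using ⟨hε.ne', h0.ne'⟩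
    · simpa [he, hi] using (hεs i (Nat.pos_of_ne_zero hi)).ne'
  have he_top : ∀ i, e i ≠ ⊤ := fun i => by
    by_cases hi : i = 0 <;> simp [he, hi, measure_ne_top]
  obtain ⟨n, hn, hn0, S, hST, hglobal, hlevel⟩ := exists_levels_subset_dense_cyl hT.2.1
    (fun i => e i / 2) (fun i => ENNReal.div_ne_zero.mpr ⟨he_pos i, ENNReal.ofNat_ne_top⟩)
    (fun i => ENNReal.div_ne_top (he_top i) two_ne_zero)
  have hS : μC (LimT T) - ε < μC (LimT S) := ENNReal.tsub_lt_of_le_add_of_lt_min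
    (measure_ne_top _ _) hglobal (ENNReal.half_lt_self (he_pos 0) (he_top 0))
  refine ⟨treeOf (LimT S), isTree_treeOf (nonempty_of_measure_ne_zero (pos_of_gt hS).ne'),
    (treeOf_LimT_subset S).trans hST, n, hn, hn0, by rwa [LimT_treeOf_LimT], ?_⟩
  rintro i hi _ ⟨y, hy, l, rfl⟩ hl
  rw [length_res] at hl
  subst hl
  rw [LimT_through, LimT_treeOf_LimT]
  have hlevel := hlevel i hi y hy
  rw [ENNReal.mul_div_cancel two_ne_zero ENNReal.ofNat_ne_top] at hlevel
  calc 2⁻¹ ^ n i * (1 - εs i) ≤ 2⁻¹ ^ n i * (1 - e i) := by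
        gcongr
        simp [he, hi.ne']
    _ < _ := ENNReal.mul_one_sub_lt_of_lt_add (ENNReal.pow_ne_top (by simp))
        (by simp [he, hi.ne']) hlevel
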